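/- arXiv:1301.0542 — 5 statements merged into one kernel-verified Lean document; each statement's English description precedes it below -/
import Mathlib

section
/- If x* is the unique minimizer of min ||x||_1 subject to Ax = b, then the null space of A and the null space of B intersect trivially, where B is the r×n matrix selecting the zero components of x*. -/
/-!
If `z ∈ ker A` vanishes wherever `x*` does, then for small `t > 0` each coordinate keeps its
sign along `x* ± t z`, so `‖x* + t z‖₁ + ‖x* - t z‖₁ = 2 ‖x*‖₁`. Both points are feasible, hence
neither has smaller norm than `x*`, so both attain the minimum, and uniqueness forces `t z = 0`.
-/

open Finset Filter Topology

lemma abs_add_add_abs_sub_of_abs_le {a c : ℝ} (h : |c| ≤ |a|) :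
    |a + c| + |a - c| = 2 * |a| := by
  obtain ⟨hc₁, hc₂⟩ := abs_le.mp h
  rcases le_total 0 a with ha | ha
  · rw [abs_of_nonneg ha] at hc₁ hc₂ ⊢
    rw [abs_of_nonneg (by linarith), abs_of_nonneg (by linarith)]
    ring
  · rw [abs_of_nonpos ha] at hc₁ hc₂ ⊢
    rw [abs_of_nonpos (by linarith), abs_of_nonpos (by linarith)]
    ring

lemma eventually_abs_mul_le {ι : Type*} [Finite ι] {x z : ι → ℝ}
    (hz : ∀ i, x i = 0 → z i = 0) : ∀ᶠ t in 𝓝 (0 : ℝ), ∀ i, |t * z i| ≤ |x i| := by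
  refine eventually_all.2 fun i => ?_
  by_cases hx : x i = 0
  · simp [hx, hz i hx]
  have hcont : Tendsto (fun t : ℝ => |t * z i|) (𝓝 0) (𝓝 0) := by
    simpa using ((continuous_id.mul continuous_const).abs.tendsto (0 : ℝ) :)
  exact hcont.eventually (ge_mem_nhds (abs_pos.mpr hx))

lemma exists_pos_sum_abs_add_add_sum_abs_sub {ι : Type*} [Fintype ι] {x z : ι → ℝ}
    (hz : ∀ i, x i = 0 → z i = 0) :
    ∃ t > 0, ∑ i, |x i + t * z i| + ∑ i, |x i - t * z i| = 2 * ∑ i, |x i| := by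
  obtain ⟨t, hsmall, ht⟩ :=
    (((eventually_abs_mul_le hz).filter_mono nhdsWithin_le_nhds).and
      (self_mem_nhdsWithin : ∀ᶠ t in 𝓝[>] (0 : ℝ), 0 < t)).exists
  refine ⟨t, ht, ?_⟩
  rw [← sum_add_distrib, mul_sum]
  exact sum_congr rfl fun i _ => abs_add_add_abs_sub_of_abs_le (hsmall i)

theorem stmt0_general {m n : ℕ} (A : Matrix (Fin m) (Fin n) ℝ) (b : Fin m → ℝ)
    (xs : Fin n → ℝ)
    (hfeas : A.mulVec xs = b)
    (hmin : ∀ x : Fin n → ℝ, A.mulVec x = b → ∑ i, |xs i| ≤ ∑ i, |x i|)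
    (huniq : ∀ x : Fin n → ℝ, A.mulVec x = b → (∑ i, |x i|) = ∑ i, |xs i| → x = xs) :
    ∀ z : Fin n → ℝ, A.mulVec z = 0 → (∀ i, xs i = 0 → z i = 0) → z = 0 := by
  intro z hz hzero
  obtain ⟨t, ht, hsum⟩ := exists_pos_sum_abs_add_add_sum_abs_sub hzero
  have hfeas_add : A.mulVec (xs + t • z) = b := by
    rw [Matrix.mulVec_add, Matrix.mulVec_smul, hz, smul_zero, add_zero, hfeas]
  have hfeas_sub : A.mulVec (xs - t • z) = b := by
    rw [Matrix.mulVec_sub, Matrix.mulVec_smul, hz, smul_zero, sub_zero, hfeas]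
  have hle_add := hmin _ hfeas_add
  have hle_sub := hmin _ hfeas_sub
  simp only [Pi.add_apply, Pi.sub_apply, Pi.smul_apply, smul_eq_mul] at hle_add hle_sub
  have heq := huniq _ hfeas_add (by simp only [Pi.add_apply, Pi.smul_apply, smul_eq_mul]; linarith)
  have htz : t • z = 0 := by simpa using heq
  exact (smul_eq_zero.mp htz).resolve_left ht.ne'

/-- If `x*` is the unique minimizer of `min ‖x‖₁ s.t. Ax = b` (A full row rank),
then the null space of `A` intersects the null space of `B` (the selector of
zero components of `x*`) trivially. -/
theorem stmt0 {m n : ℕ} (A : Matrix (Fin m) (Fin n) ℝ) (b : Fin m → ℝ)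
    (hrank : A.rank = m)
    (xs : Fin n → ℝ)
    (hfeas : A.mulVec xs = b)
    (hmin : ∀ x : Fin n → ℝ, A.mulVec x = b → ∑ i, |xs i| ≤ ∑ i, |x i|)
    (huniq : ∀ x : Fin n → ℝ, A.mulVec x = b → (∑ i, |x i|) = ∑ i, |xs i| → x = xs) :
    ∀ z : Fin n → ℝ, A.mulVec z = 0 → (∀ i, xs i = 0 → z i = 0) → z = 0 :=
  stmt0_general A b xs hfeas hmin huniq
end

section
/- If T is firmly non-expansive on a Hilbert space, y* is a fixed point of T, and y^{k+1} = T(y^k), then ||y^k - y^{k+1}||² ≤ (1/(k+1))·||y^0 - y*||² for all k ≥ 0. -/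
/-!
Firm non-expansiveness gives the Fejér inequality
`‖y^{k+1} - y*‖² + ‖y^k - y^{k+1}‖² ≤ ‖y^k - y*‖²`, and non-expansiveness makes the residuals
`‖y^k - y^{k+1}‖` non-increasing. Summing the Fejér inequality over the first `k + 1` steps
and bounding each residual below by the last one gives `(k + 1) ‖y^k - y^{k+1}‖² ≤ ‖y^0 - y*‖²`.
-/

open scoped RealInnerProductSpace

theorem add_one_mul_le_of_antitone_of_add_le {a r : ℕ → ℝ} (ha : ∀ k, 0 ≤ a k)
    (hr : Antitone r) (hdesc : ∀ k, a (k + 1) + r k ≤ a k) (k : ℕ) :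
    ((k : ℝ) + 1) * r k ≤ a 0 := by
  have hsum : ∀ k : ℕ, ((k : ℝ) + 1) * r k + a (k + 1) ≤ a 0 := by
    intro k
    induction k with
    | zero => simpa [add_comm] using hdesc 0
    | succ n ih =>
      have hstep := hdesc (n + 1)
      have hle : r (n + 1) ≤ r n := hr n.le_succ
      push_cast
      nlinarith [(by positivity : (0 : ℝ) ≤ n + 1)]
  linarith [hsum k, ha (k + 1)]

def FirmlyNonexpansive {H : Type*} [NormedAddCommGroup H] [InnerProductSpace ℝ H]
    (T : H → H) : Prop :=
  ∀ u v : H, ‖T u - T v‖ ^ 2 ≤ ⟪u - v, T u - T v⟫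

namespace FirmlyNonexpansive

variable {H : Type*} [NormedAddCommGroup H] [InnerProductSpace ℝ H] {T : H → H}

theorem norm_sub_le (hT : FirmlyNonexpansive T) (u v : H) : ‖T u - T v‖ ≤ ‖u - v‖ := by
  have hsq : ‖T u - T v‖ * ‖T u - T v‖ ≤ ‖u - v‖ * ‖T u - T v‖ := by
    rw [← sq]
    exact (hT u v).trans (real_inner_le_norm _ _)
  rcases (norm_nonneg (T u - T v)).eq_or_lt with h0 | hpos
  · rw [← h0]
    exact norm_nonneg _
  · exact le_of_mul_le_mul_right hsq hpos

theorem norm_sub_sq_add_norm_sub_sq_le (hT : FirmlyNonexpansive T) {p : H} (hp : T p = p)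
    (x : H) : ‖T x - p‖ ^ 2 + ‖x - T x‖ ^ 2 ≤ ‖x - p‖ ^ 2 := by
  -- The cross term of `x - p = (T x - p) + (x - T x)` is `⟪x - p, T x - p⟫ - ‖T x - p‖² ≥ 0`.
  have hfirm := hT x p
  rw [hp] at hfirm
  have hcross : 0 ≤ ⟪T x - p, x - T x⟫ := by
    have hsplit : x - p = (x - T x) + (T x - p) := by abel
    rw [hsplit, inner_add_left, real_inner_self_eq_norm_sq, real_inner_comm] at hfirm
    linarith
  have hnorm := norm_add_sq_real (T x - p) (x - T x)
  rw [show T x - p + (x - T x) = x - p by abel] at hnorm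
  linarith

end FirmlyNonexpansive

theorem stmt3_general {H : Type*} [NormedAddCommGroup H] [InnerProductSpace ℝ H]
    (T : H → H) (hT : ∀ u v : H, ‖T u - T v‖^2 ≤ ⟪u - v, T u - T v⟫)
    (ystar : H) (hfix : T ystar = ystar)
    (y : ℕ → H) (hiter : ∀ k : ℕ, y (k+1) = T (y k)) :
    ∀ k : ℕ, ‖y k - y (k+1)‖^2 ≤ (1 / ((k : ℝ) + 1)) * ‖y 0 - ystar‖^2 := by
  have hT : FirmlyNonexpansive T := hT
  have hres : Antitone fun k => ‖y k - y (k + 1)‖ ^ 2 := antitone_nat_of_succ_le fun k => by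
    rw [hiter (k + 1), hiter k]
    exact pow_le_pow_left₀ (norm_nonneg _) (hT.norm_sub_le _ _) 2
  have hfejer : ∀ k, ‖y (k + 1) - ystar‖ ^ 2 + ‖y k - y (k + 1)‖ ^ 2 ≤ ‖y k - ystar‖ ^ 2 := by
    intro k
    rw [hiter k]
    exact hT.norm_sub_sq_add_norm_sub_sq_le hfix (y k)
  intro k
  rw [one_div, inv_mul_eq_div, le_div_iff₀ (by positivity), mul_comm]
  exact add_one_mul_le_of_antitone_of_add_le (a := fun k => ‖y k - ystar‖ ^ 2)
    (fun _ => by positivity) hres hfejer k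

/-- If `T` is firmly non-expansive on a real Hilbert space, `y*` is a fixed point,
and `y^{k+1} = T(y^k)`, then `‖y^k - y^{k+1}‖² ≤ ‖y^0 - y*‖²/(k+1)`. -/
theorem stmt3 {H : Type*} [NormedAddCommGroup H] [InnerProductSpace ℝ H]
    [CompleteSpace H]
    (T : H → H) (hT : ∀ u v : H, ‖T u - T v‖^2 ≤ ⟪u - v, T u - T v⟫)
    (ystar : H) (hfix : T ystar = ystar)
    (y : ℕ → H) (hiter : ∀ k : ℕ, y (k+1) = T (y k)) :
    ∀ k : ℕ, ‖y k - y (k+1)‖^2 ≤ (1 / ((k : ℝ) + 1)) * ‖y 0 - ystar‖^2 :=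
  stmt3_general T hT ystar hfix y hiter
end

section
/- Any two fixed points y*_1, y*_2 of the Douglas–Rachford operator T_γ satisfy y*_1 - y*_2 ∈ R(A^T) ∩ R(B^T); consequently the fixed point is unique if and only if R(A^T) ∩ R(B^T) = {0}. -/
/-!
A point `y` is fixed by `T_γ` iff `x = P y` satisfies `S_γ (x + (x - y)) = x`, i.e. iff
`η = (x - y) / γ ∈ R(Aᵀ)` is a subgradient of `‖·‖₁` at `x`. Such a dual certificate makes `x`
a minimizer, so `x = x*` and the fixed points are exactly `x* - γη` with `η` a certificate.
Certificates agree (with `sign x*`) on the support of `x*`, which gives the first claim.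

For the converse, uniqueness of `x*` makes the one-sided derivative of `‖·‖₁` at `x*` strictly
positive in every nonzero direction of `ker A`; by compactness of the unit sphere it dominates
`ε` times the `ℓ¹` norm off the support, and Hahn–Banach then produces a strict certificate
(`|η i| < 1` off the support). If `v ≠ 0` lies in `R(Aᵀ) ∩ R(Bᵀ)`, then `η + t v` is again a
certificate for small `t ≠ 0`, giving a second fixed point.
-/

open Finset Matrix

/-- Soft-thresholding by `γ`. -/
noncomputable def softThresh {n : ℕ} (γ : ℝ) (x : Fin n → ℝ) : Fin n → ℝ :=
  fun i => Real.sign (x i) * max (|x i| - γ) 0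

/-- Projection onto the affine set `{x : Ax = b}`. -/
noncomputable def projAff {m n : ℕ} (A : Matrix (Fin m) (Fin n) ℝ) (b : Fin m → ℝ)
    (x : Fin n → ℝ) : Fin n → ℝ :=
  x + (Aᵀ * (A * Aᵀ)⁻¹).mulVec (b - A.mulVec x)

/-- Douglas-Rachford operator `T_γ = S_γ ∘ (2P - I) + I - P` for basis pursuit. -/
noncomputable def DR {m n : ℕ} (A : Matrix (Fin m) (Fin n) ℝ) (b : Fin m → ℝ)
    (γ : ℝ) (y : Fin n → ℝ) : Fin n → ℝ :=
  softThresh γ ((2 : ℝ) • projAff A b y - y) + y - projAff A b y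

open Filter Topology

lemma Real.sign_mul_self_eq_abs (r : ℝ) : Real.sign r * r = |r| := by
  rcases lt_trichotomy r 0 with h | rfl | h
  · rw [Real.sign_of_neg h, abs_of_neg h]; ring
  · simp
  · rw [Real.sign_of_pos h, abs_of_pos h, one_mul]

lemma Real.abs_sign_le_one (r : ℝ) : |Real.sign r| ≤ 1 := by
  rcases Real.sign_apply_eq r with h | h | h <;> simp [h]

lemma Real.sign_mul_max_abs_sub {γ : ℝ} (hγ : 0 ≤ γ) (t : ℝ) :
    Real.sign t * max (|t| - γ) 0 = if γ < t then t - γ else if t < -γ then t + γ else 0 := by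
  split_ifs with h₁ h₂
  · rw [Real.sign_of_pos (by linarith), abs_of_pos (by linarith), max_eq_left (by linarith)]
    ring
  · rw [Real.sign_of_neg (by linarith), abs_of_neg (by linarith), max_eq_left (by linarith)]
    ring
  · rw [max_eq_right (by rw [sub_nonpos, abs_le]; constructor <;> linarith), mul_zero]

lemma Real.sign_mul_max_abs_add_sub_eq_iff {γ : ℝ} (hγ : 0 < γ) (a u : ℝ) :
    Real.sign (a + u) * max (|a + u| - γ) 0 = a ↔ |u| ≤ γ ∧ (a ≠ 0 → u = γ * Real.sign a) := by
  rw [Real.sign_mul_max_abs_sub hγ.le, abs_le]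
  rcases lt_trichotomy a 0 with ha | rfl | ha
  · rw [Real.sign_of_neg ha]
    split_ifs <;> grind
  · split_ifs <;> grind
  · rw [Real.sign_of_pos ha]
    split_ifs <;> grind

def IsL1Subgradient {ι : Type*} (x η : ι → ℝ) : Prop :=
  ∀ i, |η i| ≤ 1 ∧ (x i ≠ 0 → η i = Real.sign (x i))

lemma softThresh_add_smul_eq_self_iff {n : ℕ} {γ : ℝ} (hγ : 0 < γ) (x η : Fin n → ℝ) :
    softThresh γ (x + γ • η) = x ↔ IsL1Subgradient x η := by
  simp only [funext_iff, softThresh, Pi.add_apply, Pi.smul_apply, smul_eq_mul,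
    Real.sign_mul_max_abs_add_sub_eq_iff hγ, IsL1Subgradient, abs_mul, abs_of_pos hγ,
    mul_le_iff_le_one_right hγ, mul_right_inj' hγ.ne']

namespace IsL1Subgradient

variable {ι : Type*} [Fintype ι] {x η : ι → ℝ}

lemma dotProduct_self (h : IsL1Subgradient x η) : η ⬝ᵥ x = ∑ i, |x i| := by
  refine Finset.sum_congr rfl fun i _ => ?_
  by_cases hx : x i = 0
  · simp [hx]
  · rw [(h i).2 hx, Real.sign_mul_self_eq_abs]

lemma dotProduct_le (h : IsL1Subgradient x η) (x' : ι → ℝ) : η ⬝ᵥ x' ≤ ∑ i, |x' i| :=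
  Finset.sum_le_sum fun i _ => calc
    η i * x' i ≤ |η i| * |x' i| := by rw [← abs_mul]; exact le_abs_self _
    _ ≤ |x' i| := mul_le_of_le_one_left (abs_nonneg _) (h i).1

lemma sum_abs_le (h : IsL1Subgradient x η) {x' : ι → ℝ} (hx' : η ⬝ᵥ x' = η ⬝ᵥ x) :
    ∑ i, |x i| ≤ ∑ i, |x' i| :=
  h.dotProduct_self ▸ hx' ▸ h.dotProduct_le x'

end IsL1Subgradient

section AffineProjection

variable {m n : ℕ} (A : Matrix (Fin m) (Fin n) ℝ) (b : Fin m → ℝ)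

lemma isUnit_mul_transpose_of_rank_eq (hA : A.rank = m) : IsUnit (A * Aᵀ) := by
  have hrank : (A * Aᵀ).rank = Module.finrank ℝ (Fin m → ℝ) := by
    rw [rank_self_mul_transpose, hA, Module.finrank_fin_fun]
  rw [← mulVec_surjective_iff_isUnit, ← Matrix.coe_mulVecLin, ← LinearMap.range_eq_top]
  exact Submodule.eq_top_of_finrank_eq hrank

lemma transpose_mulVec_dotProduct_of_mulVec_eq_zero {d : Fin n → ℝ} (hd : A *ᵥ d = 0)
    (w : Fin m → ℝ) : Aᵀ *ᵥ w ⬝ᵥ d = 0 := by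
  rw [dotProduct_comm, dotProduct_mulVec, vecMul_transpose, hd, zero_dotProduct]

lemma projAff_sub_self (y : Fin n → ℝ) :
    projAff A b y - y = Aᵀ *ᵥ ((A * Aᵀ)⁻¹ *ᵥ (b - A *ᵥ y)) := by
  rw [projAff, add_sub_cancel_left, mulVec_mulVec]

variable {A}

lemma mulVec_projAff (hA : IsUnit (A * Aᵀ)) (y : Fin n → ℝ) : A *ᵥ projAff A b y = b := by
  rw [projAff, mulVec_add, mulVec_mulVec, ← Matrix.mul_assoc,
    mul_nonsing_inv _ ((isUnit_iff_isUnit_det _).1 hA), one_mulVec, add_sub_cancel]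

lemma projAff_sub_transpose_mulVec (hA : IsUnit (A * Aᵀ)) {x : Fin n → ℝ} (hx : A *ᵥ x = b)
    (w : Fin m → ℝ) : projAff A b (x - Aᵀ *ᵥ w) = x := by
  rw [projAff, ← hx, ← mulVec_sub, sub_sub_cancel, mulVec_mulVec,
    mulVec_mulVec, Matrix.mul_assoc _ A, Matrix.mul_assoc Aᵀ,
    nonsing_inv_mul _ ((isUnit_iff_isUnit_det _).1 hA), Matrix.mul_one, sub_add_cancel]

end AffineProjection

section FixedPoints

variable {m n : ℕ} {A : Matrix (Fin m) (Fin n) ℝ} {b : Fin m → ℝ} {γ : ℝ} {xs : Fin n → ℝ}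

lemma DR_eq_self_iff (hA : IsUnit (A * Aᵀ)) (hγ : 0 < γ) (hxs : A *ᵥ xs = b)
    (hopt : ∀ x, A *ᵥ x = b → ∑ i, |x i| ≤ ∑ i, |xs i| → x = xs) (y : Fin n → ℝ) :
    DR A b γ y = y ↔ ∃ w, IsL1Subgradient xs (Aᵀ *ᵥ w) ∧ y = xs - γ • Aᵀ *ᵥ w := by
  constructor
  · intro hy
    rw [DR] at hy
    set x := projAff A b y
    set w := γ⁻¹ • ((A * Aᵀ)⁻¹ *ᵥ (b - A *ᵥ y))
    have hxy : x - y = γ • Aᵀ *ᵥ w := by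
      rw [mulVec_smul, smul_smul, mul_inv_cancel₀ hγ.ne', one_smul]
      exact projAff_sub_self A b y
    have hη : IsL1Subgradient x (Aᵀ *ᵥ w) := by
      rw [← softThresh_add_smul_eq_self_iff hγ, ← hxy, ← add_sub_assoc, ← two_smul ℝ x]
      linear_combination hy
    have hx : A *ᵥ x = b := mulVec_projAff b hA y
    have hdot : Aᵀ *ᵥ w ⬝ᵥ xs = Aᵀ *ᵥ w ⬝ᵥ x := by
      rw [← sub_eq_zero, ← dotProduct_sub]
      refine transpose_mulVec_dotProduct_of_mulVec_eq_zero A ?_ w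
      rw [mulVec_sub, hx, hxs, sub_self]
    have hxs' : x = xs := hopt x hx (hη.sum_abs_le hdot)
    refine ⟨w, hxs' ▸ hη, ?_⟩
    rw [← hxs', ← hxy, sub_sub_cancel]
  · rintro ⟨w, hη, rfl⟩
    have hP : projAff A b (xs - γ • Aᵀ *ᵥ w) = xs := by
      rw [← mulVec_smul]
      exact projAff_sub_transpose_mulVec b hA hxs _
    have hreflect : (2 : ℝ) • xs - (xs - γ • Aᵀ *ᵥ w) = xs + γ • Aᵀ *ᵥ w := by module
    rw [DR, hP, hreflect, (softThresh_add_smul_eq_self_iff hγ _ _).2 hη]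
    abel

lemma DR_fixedPoints_sub (hA : IsUnit (A * Aᵀ)) (hγ : 0 < γ) (hxs : A *ᵥ xs = b)
    (hopt : ∀ x, A *ᵥ x = b → ∑ i, |x i| ≤ ∑ i, |xs i| → x = xs) {y₁ y₂ : Fin n → ℝ}
    (h₁ : DR A b γ y₁ = y₁) (h₂ : DR A b γ y₂ = y₂) :
    (∃ z, y₁ - y₂ = Aᵀ *ᵥ z) ∧ ∀ i, xs i ≠ 0 → y₁ i - y₂ i = 0 := by
  obtain ⟨w₁, hη₁, rfl⟩ := (DR_eq_self_iff hA hγ hxs hopt y₁).1 h₁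
  obtain ⟨w₂, hη₂, rfl⟩ := (DR_eq_self_iff hA hγ hxs hopt y₂).1 h₂
  refine ⟨⟨γ • (w₂ - w₁), by rw [mulVec_smul, mulVec_sub]; module⟩, fun i hi => ?_⟩
  simp [(hη₁ i).2 hi, (hη₂ i).2 hi]

end FixedPoints

section Certificates

variable {ι κ : Type*} [Fintype ι]

noncomputable def l1DirDeriv (x d : ι → ℝ) : ℝ :=
  ∑ i, if x i = 0 then |d i| else Real.sign (x i) * d i

lemma continuous_l1DirDeriv (x : ι → ℝ) : Continuous (l1DirDeriv x) :=
  continuous_finsetSum _ fun i _ => by split_ifs <;> fun_prop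

lemma l1DirDeriv_smul (x : ι → ℝ) {c : ℝ} (hc : 0 ≤ c) (d : ι → ℝ) :
    l1DirDeriv x (c • d) = c * l1DirDeriv x d := by
  rw [l1DirDeriv, l1DirDeriv, Finset.mul_sum]
  refine Finset.sum_congr rfl fun i _ => ?_
  split_ifs
  · rw [Pi.smul_apply, smul_eq_mul, abs_mul, abs_of_nonneg hc]
  · rw [Pi.smul_apply, smul_eq_mul]; ring

lemma abs_add_mul_eventually_eq (a c : ℝ) :
    ∀ᶠ τ in 𝓝[>] 0, |a + τ * c| = |a| + τ * (if a = 0 then |c| else Real.sign a * c) := by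
  have hlim : Tendsto (fun τ : ℝ => a + τ * c) (𝓝 0) (𝓝 a) :=
    Continuous.tendsto' (by fun_prop) 0 a (by simp)
  rcases lt_trichotomy a 0 with ha | rfl | ha
  · filter_upwards [nhdsWithin_le_nhds (hlim.eventually_lt_const ha)] with τ hτ
    rw [if_neg ha.ne, Real.sign_of_neg ha, abs_of_neg hτ, abs_of_neg ha]
    ring
  · filter_upwards [self_mem_nhdsWithin] with τ (hτ : 0 < τ)
    rw [if_pos rfl, zero_add, abs_zero, zero_add, abs_mul, abs_of_pos hτ]
  · filter_upwards [nhdsWithin_le_nhds (hlim.eventually_const_lt ha)] with τ hτ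
    rw [if_neg ha.ne', Real.sign_of_pos ha, abs_of_pos hτ, abs_of_pos ha]
    ring

lemma sum_abs_add_mul_eventually_eq (x d : ι → ℝ) :
    ∀ᶠ τ in 𝓝[>] 0, ∑ i, |x i + τ * d i| = ∑ i, |x i| + τ * l1DirDeriv x d := by
  filter_upwards [eventually_all.2 fun i => abs_add_mul_eventually_eq (x i) (d i)] with τ hτ
  simp only [hτ, l1DirDeriv, Finset.sum_add_distrib, Finset.mul_sum]

lemma l1DirDeriv_pos {A : Matrix κ ι ℝ} {b : κ → ℝ} {x : ι → ℝ}
    (hopt : ∀ x', A *ᵥ x' = b → ∑ i, |x' i| ≤ ∑ i, |x i| → x' = x) (hx : A *ᵥ x = b)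
    {d : ι → ℝ} (hd : A *ᵥ d = 0) (hd0 : d ≠ 0) : 0 < l1DirDeriv x d := by
  obtain ⟨τ, hτ, hτpos : 0 < τ⟩ :=
    ((sum_abs_add_mul_eventually_eq x d).and self_mem_nhdsWithin).exists
  by_contra! hneg
  have hfeas : A *ᵥ (x + τ • d) = b := by
    rw [mulVec_add, mulVec_smul, hd, smul_zero, add_zero, hx]
  have hle : ∑ i, |(x + τ • d) i| ≤ ∑ i, |x i| := by
    simp only [Pi.add_apply, Pi.smul_apply, smul_eq_mul, hτ]
    nlinarith
  exact hd0 ((smul_eq_zero.1 (add_eq_left.1 (hopt _ hfeas hle))).resolve_left hτpos.ne')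

lemma exists_pos_mul_norm_le {E : Type*} [NormedAddCommGroup E] [NormedSpace ℝ E]
    [FiniteDimensional ℝ E] (V : Submodule ℝ E) {f : E → ℝ} (hf : Continuous f)
    (hhom : ∀ c : ℝ, 0 ≤ c → ∀ x, f (c • x) = c * f x) (hpos : ∀ x ∈ V, x ≠ 0 → 0 < f x) :
    ∃ c > 0, ∀ x ∈ V, c * ‖x‖ ≤ f x := by
  have hS : IsCompact ((V : Set E) ∩ Metric.sphere 0 1) :=
    (isCompact_sphere 0 1).inter_left V.closed_of_finiteDimensional
  obtain ⟨c, hc, hcS⟩ := hS.exists_forall_le' hf.continuousOn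
    fun x hx => hpos x hx.1 (ne_zero_of_mem_unit_sphere ⟨x, hx.2⟩)
  refine ⟨c, hc, fun x hx => ?_⟩
  rcases eq_or_ne x 0 with rfl | hx0
  · simp [show f 0 = 0 by simpa using hhom 0 le_rfl 0]
  · have hunit : ‖x‖⁻¹ • x ∈ (V : Set E) ∩ Metric.sphere 0 1 :=
      ⟨V.smul_mem _ hx, by simp [norm_smul, hx0]⟩
    calc c * ‖x‖ ≤ f (‖x‖⁻¹ • x) * ‖x‖ := by gcongr; exact hcS _ hunit
      _ = f x := by
        rw [hhom _ (by positivity), mul_comm, ← mul_assoc, mul_inv_cancel₀ (norm_ne_zero_iff.2 hx0),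
          one_mul]

lemma exists_forall_lt_zero_of_disjoint_submodule {E : Type*} [AddCommGroup E] [Module ℝ E]
    [TopologicalSpace E] [IsTopologicalAddGroup E] [ContinuousSMul ℝ E] [LocallyConvexSpace ℝ E]
    {K : Set E} (hK : Convex ℝ K) (hKc : IsCompact K) {V : Submodule ℝ E}
    (hV : IsClosed (V : Set E)) (h : Disjoint K V) :
    ∃ f : StrongDual ℝ E, (∀ v ∈ V, f v = 0) ∧ ∀ a ∈ K, f a < 0 := by
  obtain ⟨f, u, v, hfu, huv, hvf⟩ := geometric_hahn_banach_compact_closed hK hKc V.convex hV h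
  have hv : v < 0 := by simpa using hvf 0 V.zero_mem
  refine ⟨f, fun y hy => ?_, fun a ha => by linarith [hfu a ha]⟩
  by_contra hfy
  -- a functional bounded below on a subspace vanishes there
  have := hvf (((v - 1) / f y) • y) (V.smul_mem _ hy)
  rw [map_smul, smul_eq_mul, div_mul_cancel₀ _ hfy] at this
  linarith

lemma exists_mulVec_eq_zero_forall_dotProduct_neg [Fintype κ] (A : Matrix κ ι ℝ)
    {K : Set (ι → ℝ)} (hK : Convex ℝ K) (hKc : IsCompact K) (h : ∀ w, Aᵀ *ᵥ w ∉ K) :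
    ∃ d, A *ᵥ d = 0 ∧ ∀ a ∈ K, a ⬝ᵥ d < 0 := by
  classical
  have hdisj : Disjoint K (LinearMap.range Aᵀ.mulVecLin) :=
    Set.disjoint_left.2 fun _ haK ⟨w, hw⟩ => h w (by rwa [← hw] at haK)
  obtain ⟨f, hfV, hfK⟩ := exists_forall_lt_zero_of_disjoint_submodule hK hKc
    (Submodule.closed_of_finiteDimensional _) hdisj
  set d : ι → ℝ := fun i => f fun j => if i = j then 1 else 0
  have hf : ∀ a, f a = a ⬝ᵥ d := fun a => LinearMap.pi_apply_eq_sum_univ (f : _ →ₗ[ℝ] ℝ) a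
  refine ⟨d, ?_, fun a ha => hf a ▸ hfK a ha⟩
  have := hf (Aᵀ *ᵥ (A *ᵥ d)) ▸ hfV _ ⟨A *ᵥ d, rfl⟩
  rw [dotProduct_comm, dotProduct_mulVec, vecMul_transpose] at this
  exact dotProduct_self_eq_zero.1 this

/-- The dual form of the null space property: test the functional given by the separation
lemma on a suitable point of the box of admissible certificates. -/
lemma exists_transpose_mulVec_of_forall_le [Fintype κ] (A : Matrix κ ι ℝ) (x : ι → ℝ) {ε : ℝ}
    (hε : ε ≤ 1) (h : ∀ d, A *ᵥ d = 0 → ε * ∑ i with x i = 0, |d i| ≤ l1DirDeriv x d) :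
    ∃ w, ∀ i, (x i ≠ 0 → (Aᵀ *ᵥ w) i = Real.sign (x i)) ∧
      (x i = 0 → |(Aᵀ *ᵥ w) i| ≤ 1 - ε) := by
  set K : Set (ι → ℝ) := Set.univ.pi fun i =>
    if x i = 0 then Set.Icc (-(1 - ε)) (1 - ε) else {Real.sign (x i)}
  have hKconv : Convex ℝ K := convex_pi fun i _ => by
    split_ifs
    exacts [convex_Icc _ _, convex_singleton _]
  have hKcomp : IsCompact K := isCompact_univ_pi fun i => by
    split_ifs
    exacts [isCompact_Icc, isCompact_singleton]
  by_contra hno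
  obtain ⟨d, hd, hdK⟩ := exists_mulVec_eq_zero_forall_dotProduct_neg A hKconv hKcomp fun w hw => by
    refine hno ⟨w, fun i => ?_⟩
    have hi := hw i (Set.mem_univ i)
    by_cases hxi : x i = 0
    · simp only [hxi, if_true, Set.mem_Icc] at hi
      exact ⟨fun h => absurd hxi h, fun _ => abs_le.2 hi⟩
    · simp only [hxi, if_false, Set.mem_singleton_iff] at hi
      exact ⟨fun _ => hi, fun h => absurd h hxi⟩
  set a : ι → ℝ := fun i => if x i = 0 then (1 - ε) * Real.sign (d i) else Real.sign (x i)
  have haK : a ∈ K := fun i _ => by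
    by_cases hxi : x i = 0
    · simp only [a, hxi, if_true, Set.mem_Icc]
      rw [← abs_le, abs_mul, abs_of_nonneg (by linarith)]
      exact mul_le_of_le_one_right (by linarith) (Real.abs_sign_le_one _)
    · simp only [a, hxi, if_false, Set.mem_singleton_iff]
  have hda : a ⬝ᵥ d = l1DirDeriv x d - ε * ∑ i with x i = 0, |d i| := by
    rw [dotProduct, l1DirDeriv, Finset.sum_filter, Finset.mul_sum, ← Finset.sum_sub_distrib]
    refine Finset.sum_congr rfl fun i _ => ?_
    by_cases hxi : x i = 0
    · simp only [a, hxi, if_true, mul_assoc, Real.sign_mul_self_eq_abs]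
      ring
    · simp only [a, hxi, if_false, mul_zero, sub_zero]
  linarith [hdK a haK, h d hd]

lemma exists_isL1Subgradient_transpose_mulVec_abs_lt_one [Fintype κ] {A : Matrix κ ι ℝ}
    {b : κ → ℝ} {x : ι → ℝ} (hx : A *ᵥ x = b)
    (hopt : ∀ x', A *ᵥ x' = b → ∑ i, |x' i| ≤ ∑ i, |x i| → x' = x) :
    ∃ w, IsL1Subgradient x (Aᵀ *ᵥ w) ∧ ∀ i, x i = 0 → |(Aᵀ *ᵥ w) i| < 1 := by
  obtain ⟨c, hc, hcoer⟩ := exists_pos_mul_norm_le (LinearMap.ker A.mulVecLin)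
    (continuous_l1DirDeriv x) (fun _ hc d => l1DirDeriv_smul x hc d)
    fun d hd hd0 => l1DirDeriv_pos hopt hx hd hd0
  set N : ℝ := (Fintype.card ι : ℝ)
  set ε := min 1 (c / (N + 1))
  have hε : 0 < ε := by positivity
  have hεN : ε * N ≤ c := calc
    ε * N ≤ c / (N + 1) * N := by gcongr; exact min_le_right _ _
    _ ≤ c := by rw [div_mul_eq_mul_div, div_le_iff₀ (by positivity)]; nlinarith
  obtain ⟨w, hw⟩ := exists_transpose_mulVec_of_forall_le A x (min_le_left _ _) fun d hd => calc
    ε * ∑ i with x i = 0, |d i| ≤ ε * (N * ‖d‖) := by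
      gcongr
      calc ∑ i with x i = 0, |d i| ≤ ∑ i, |d i| :=
            Finset.sum_le_sum_of_subset_of_nonneg (Finset.filter_subset _ _)
              fun _ _ _ => abs_nonneg _
        _ ≤ ∑ _i : ι, ‖d‖ := Finset.sum_le_sum fun i _ => norm_le_pi_norm d i
        _ = N * ‖d‖ := by simp [N]
    _ ≤ c * ‖d‖ := by rw [← mul_assoc]; gcongr
    _ ≤ l1DirDeriv x d := hcoer d hd
  refine ⟨w, fun i => ⟨?_, (hw i).1⟩, fun i hxi => ((hw i).2 hxi).trans_lt (by linarith)⟩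
  by_cases hxi : x i = 0
  · linarith [(hw i).2 hxi]
  · rw [(hw i).1 hxi]
    exact Real.abs_sign_le_one _

end Certificates

lemma IsL1Subgradient.exists_ne_zero_add_smul {ι : Type*} [Finite ι] {x η v : ι → ℝ}
    (h : IsL1Subgradient x η) (hstrict : ∀ i, x i = 0 → |η i| < 1)
    (hv : ∀ i, x i ≠ 0 → v i = 0) : ∃ t : ℝ, t ≠ 0 ∧ IsL1Subgradient x (η + t • v) := by
  have hsmall : ∀ᶠ t in 𝓝 (0 : ℝ), ∀ i, x i = 0 → |η i + t * v i| < 1 := by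
    refine eventually_all.2 fun i => ?_
    by_cases hxi : x i = 0
    · have hlim : Tendsto (fun t : ℝ => |η i + t * v i|) (𝓝 0) (𝓝 |η i|) :=
        Continuous.tendsto' (by fun_prop) 0 _ (by simp)
      filter_upwards [hlim.eventually_lt_const (hstrict i hxi)] with t ht using fun _ => ht
    · exact Eventually.of_forall fun t hx0 => absurd hx0 hxi
  have hsmall' : ∀ᶠ t in 𝓝[≠] (0 : ℝ), ∀ i, x i = 0 → |η i + t * v i| < 1 :=
    eventually_nhdsWithin_of_eventually_nhds hsmall
  obtain ⟨t, ht, ht0 : t ≠ 0⟩ := (hsmall'.and self_mem_nhdsWithin).exists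
  refine ⟨t, ht0, fun i => ?_⟩
  simp only [Pi.add_apply, Pi.smul_apply, smul_eq_mul]
  by_cases hxi : x i = 0
  · exact ⟨(ht i hxi).le, fun h => absurd hxi h⟩
  · rw [hv i hxi, mul_zero, add_zero]
    exact h i

/-- Any two fixed points of `T_γ` differ by an element of `R(Aᵀ) ∩ R(Bᵀ)`
(where `R(Bᵀ)` consists of vectors supported on the zero set of `x*`); consequently
the fixed point is unique iff `R(Aᵀ) ∩ R(Bᵀ) = {0}`. -/
theorem stmt6 {m n : ℕ} (A : Matrix (Fin m) (Fin n) ℝ) (b : Fin m → ℝ)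
    (hrank : A.rank = m) (γ : ℝ) (hγ : 0 < γ)
    (xs : Fin n → ℝ)
    (hfeas : A.mulVec xs = b)
    (hmin : ∀ x : Fin n → ℝ, A.mulVec x = b → ∑ i, |xs i| ≤ ∑ i, |x i|)
    (huniq : ∀ x : Fin n → ℝ, A.mulVec x = b → (∑ i, |x i|) = ∑ i, |xs i| → x = xs) :
    (∀ y1 y2 : Fin n → ℝ, DR A b γ y1 = y1 → DR A b γ y2 = y2 →
      (∃ z : Fin m → ℝ, y1 - y2 = Aᵀ.mulVec z) ∧ (∀ i, xs i ≠ 0 → y1 i - y2 i = 0)) ∧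
    ((∀ y1 y2 : Fin n → ℝ, DR A b γ y1 = y1 → DR A b γ y2 = y2 → y1 = y2) ↔
      (∀ v : Fin n → ℝ, (∃ z : Fin m → ℝ, v = Aᵀ.mulVec z) →
        (∀ i, xs i ≠ 0 → v i = 0) → v = 0)) := by
  have hopt : ∀ x, A *ᵥ x = b → ∑ i, |x i| ≤ ∑ i, |xs i| → x = xs :=
    fun x hx hle => huniq x hx (le_antisymm hle (hmin x hx))
  have hA := isUnit_mul_transpose_of_rank_eq A hrank
  have hfix := DR_eq_self_iff hA hγ hfeas hopt
  have hdiff := fun y₁ y₂ => DR_fixedPoints_sub (y₁ := y₁) (y₂ := y₂) hA hγ hfeas hopt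
  refine ⟨hdiff, fun hfixUnique v ⟨z, hv⟩ hvS => ?_, fun h y₁ y₂ h₁ h₂ => ?_⟩
  · obtain ⟨w, hη, hstrict⟩ := exists_isL1Subgradient_transpose_mulVec_abs_lt_one hfeas hopt
    obtain ⟨t, ht, hηt⟩ := hη.exists_ne_zero_add_smul hstrict hvS
    rw [hv, ← mulVec_smul, ← mulVec_add] at hηt
    have heq := hfixUnique _ _ ((hfix _).2 ⟨w, hη, rfl⟩) ((hfix _).2 ⟨_, hηt, rfl⟩)
    rw [mulVec_add, mulVec_smul, ← hv, smul_add, sub_add_eq_sub_sub] at heq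
    simpa [hγ.ne', ht] using sub_eq_self.1 heq.symm
  · obtain ⟨⟨z, hz⟩, hS⟩ := hdiff y₁ y₂ h₁ h₂
    exact sub_eq_zero.1 (h _ ⟨z, hz⟩ hS)
end

section
/- Let U, V be subspaces of R^n with U ∩ V = {0}, and let P_U, P_V denote the orthogonal projections onto U and V respectively, with P_{U^⊥} = I - P_U, P_{V^⊥} = I - P_V. Then the operator norm of the matrix T = P_V P_U + P_{V^⊥} P_{U^⊥}, restricted to the orthogonal complement of U^⊥ ∩ V^⊥, equals cos θ_1, where θ_1 > 0 is the first (smallest) principal angle between U and V. -/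
open scoped RealInnerProductSpace

/-!
Decompose `x ∈ U ⊔ V` as `a + b` with `a = P_U x` and `b = P_{U⊥} x`. Then `T x = P_V a + P_{V⊥} b`
is an orthogonal sum, `‖P_V a‖ ≤ c ‖a‖` because `c` bounds `⟪u, v⟫` on unit vectors, and
`‖P_{V⊥} b‖ ≤ c ‖b‖` by a second Cauchy–Schwarz argument for
`b ∈ U⊥ ∩ (U ⊔ V)`; Pythagoras gives `‖T x‖ ≤ c ‖x‖`.
A pair of unit vectors `u, v` realising `c` gives `T u = P_V u` with `‖P_V u‖ = c`, and `c < 1`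
because `⟪u, v⟫ = 1` forces `u = v ∈ U ⊓ V`.
-/

/-- The operator `T = P_V P_U + P_{V⊥} P_{U⊥}`. -/
noncomputable def TOper {n : ℕ} (U V : Submodule ℝ (EuclideanSpace ℝ (Fin n)))
    (x : EuclideanSpace ℝ (Fin n)) : EuclideanSpace ℝ (Fin n) :=
  ((Submodule.orthogonalProjectionOnto V
      ((Submodule.orthogonalProjectionOnto U x : EuclideanSpace ℝ (Fin n)))) : EuclideanSpace ℝ (Fin n))
  + ((x - (Submodule.orthogonalProjectionOnto U x : EuclideanSpace ℝ (Fin n)))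
      - (Submodule.orthogonalProjectionOnto V
          (x - (Submodule.orthogonalProjectionOnto U x : EuclideanSpace ℝ (Fin n))) : EuclideanSpace ℝ (Fin n)))

section PrincipalAngle

variable {E : Type*} [NormedAddCommGroup E] [InnerProductSpace ℝ E] {U V : Submodule ℝ E} {c : ℝ}

theorem inner_le_mul_norm_mul_norm_of_mem_upperBounds
    (hc : c ∈ upperBounds {t : ℝ | ∃ u ∈ U, ∃ v ∈ V, ‖u‖ = 1 ∧ ‖v‖ = 1 ∧ t = ⟪u, v⟫})
    {u v : E} (hu : u ∈ U) (hv : v ∈ V) : ⟪u, v⟫ ≤ c * ‖u‖ * ‖v‖ := by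
  rcases eq_or_ne u 0 with rfl | hu0
  · simp
  rcases eq_or_ne v 0 with rfl | hv0
  · simp
  have h := hc ⟨_, U.smul_mem ‖u‖⁻¹ hu, _, V.smul_mem ‖v‖⁻¹ hv,
    norm_smul_inv_norm hu0, norm_smul_inv_norm hv0, rfl⟩
  rw [real_inner_smul_left, real_inner_smul_right, ← mul_assoc, ← mul_inv,
    inv_mul_le_iff₀ (by positivity)] at h
  linarith

theorem nonneg_of_isGreatest_inner
    (hc : IsGreatest {t : ℝ | ∃ u ∈ U, ∃ v ∈ V, ‖u‖ = 1 ∧ ‖v‖ = 1 ∧ t = ⟪u, v⟫} c) : 0 ≤ c := by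
  obtain ⟨u, hu, v, hv, hu1, hv1, rfl⟩ := hc.1
  have := hc.2 ⟨u, hu, -v, V.neg_mem hv, hu1, by rwa [norm_neg], rfl⟩
  rw [inner_neg_right] at this
  linarith

theorem lt_one_of_isGreatest_inner (hUV : U ⊓ V = ⊥)
    (hc : IsGreatest {t : ℝ | ∃ u ∈ U, ∃ v ∈ V, ‖u‖ = 1 ∧ ‖v‖ = 1 ∧ t = ⟪u, v⟫} c) : c < 1 := by
  obtain ⟨u, hu, v, hv, hu1, hv1, rfl⟩ := hc.1
  refine lt_of_le_of_ne (by simpa [hu1, hv1] using real_inner_le_norm u v) fun h => ?_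
  obtain rfl := (inner_eq_one_iff_of_norm_eq_one hu1 hv1).mp h
  have : u ∈ U ⊓ V := ⟨hu, hv⟩
  simp_all

theorem one_sub_sq_mul_norm_sq_le_norm_add_sq
    (hc : ∀ u ∈ U, ∀ v ∈ V, ⟪u, v⟫ ≤ c * ‖u‖ * ‖v‖) {u v : E} (hu : u ∈ U) (hv : v ∈ V) :
    (1 - c ^ 2) * ‖v‖ ^ 2 ≤ ‖u + v‖ ^ 2 := by
  have h := hc u hu (-v) (V.neg_mem hv)
  rw [inner_neg_right, norm_neg] at h
  rw [norm_add_sq_real]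
  nlinarith [sq_nonneg (‖u‖ - c * ‖v‖)]

theorem Submodule.real_inner_starProjection_self (K : Submodule ℝ E) [K.HasOrthogonalProjection]
    (x : E) : ⟪K.starProjection x, x⟫ = ‖K.starProjection x‖ ^ 2 := by
  simpa using K.re_inner_starProjection_eq_normSq x

variable [V.HasOrthogonalProjection]

theorem norm_starProjection_le_of_mem (hc0 : 0 ≤ c)
    (hc : ∀ u ∈ U, ∀ v ∈ V, ⟪u, v⟫ ≤ c * ‖u‖ * ‖v‖) {u : E} (hu : u ∈ U) :
    ‖V.starProjection u‖ ≤ c * ‖u‖ := by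
  set w := V.starProjection u
  rcases (norm_nonneg w).eq_or_lt with h0 | hpos
  · rw [← h0]; positivity
  refine le_of_mul_le_mul_right ?_ hpos
  calc ‖w‖ * ‖w‖ = ⟪u, w⟫ := by
        rw [real_inner_comm, V.real_inner_starProjection_self, sq]
    _ ≤ c * ‖u‖ * ‖w‖ := hc u hu w (V.starProjection_apply_mem u)

/-- Writing `b = u + v`, orthogonality to `U` gives `‖b‖² = ⟪P_V b, v⟫ ≤ ‖P_V b‖ ‖v‖`, while
`‖v‖² ≤ ‖b‖² / (1 - c²)`. -/
theorem norm_sq_starProjection_orthogonal_le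
    (hc : ∀ u ∈ U, ∀ v ∈ V, ⟪u, v⟫ ≤ c * ‖u‖ * ‖v‖) {b : E} (hbU : b ∈ Uᗮ) (hb : b ∈ U ⊔ V) :
    ‖Vᗮ.starProjection b‖ ^ 2 ≤ c ^ 2 * ‖b‖ ^ 2 := by
  obtain ⟨u, hu, v, hv, rfl⟩ := Submodule.mem_sup.mp hb
  set b := u + v
  have hpyth := V.norm_sq_eq_add_norm_sq_starProjection b
  suffices (1 - c ^ 2) * ‖b‖ ^ 2 ≤ ‖V.starProjection b‖ ^ 2 by linarith
  have hbv : ‖b‖ ^ 2 ≤ ‖V.starProjection b‖ * ‖v‖ :=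
    calc ‖b‖ ^ 2 = ⟪b, v⟫ := by
          rw [← real_inner_self_eq_norm_sq, inner_add_right,
            Submodule.inner_left_of_mem_orthogonal hu hbU, zero_add]
      _ = ⟪V.starProjection b, v⟫ := by
          rw [Submodule.inner_starProjection_left_eq_right, V.starProjection_eq_self_iff.mpr hv]
      _ ≤ ‖V.starProjection b‖ * ‖v‖ := real_inner_le_norm _ _
  have hvb := one_sub_sq_mul_norm_sq_le_norm_add_sq hc hu hv
  rcases le_or_gt 1 (c ^ 2) with hc1 | hc1
  · nlinarith [sq_nonneg ‖V.starProjection b‖]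
  rcases (norm_nonneg b).eq_or_lt with hb0 | hb0
  · rw [← hb0]; nlinarith [sq_nonneg ‖V.starProjection b‖]
  have : (1 - c ^ 2) * ‖b‖ ^ 2 * ‖b‖ ^ 2 ≤ ‖V.starProjection b‖ ^ 2 * ‖b‖ ^ 2 := by
    nlinarith [mul_le_mul hbv hbv (sq_nonneg _) (by positivity)]
  exact le_of_mul_le_mul_right this (by positivity)

theorem norm_starProjection_eq_of_inner_eq (hc0 : 0 ≤ c)
    (hc : ∀ u ∈ U, ∀ v ∈ V, ⟪u, v⟫ ≤ c * ‖u‖ * ‖v‖) {u v : E} (hu : u ∈ U) (hv : v ∈ V)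
    (hu1 : ‖u‖ = 1) (hv1 : ‖v‖ = 1) (huv : ⟪u, v⟫ = c) : ‖V.starProjection u‖ = c := by
  refine le_antisymm (by simpa [hu1] using norm_starProjection_le_of_mem hc0 hc hu) ?_
  calc c = ⟪V.starProjection u, v⟫ := by
        rw [Submodule.inner_starProjection_left_eq_right, V.starProjection_eq_self_iff.mpr hv, huv]
    _ ≤ ‖V.starProjection u‖ := by simpa [hv1] using real_inner_le_norm (V.starProjection u) v

variable [U.HasOrthogonalProjection]

theorem norm_starProjection_add_starProjection_orthogonal_le (hc0 : 0 ≤ c)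
    (hc : ∀ u ∈ U, ∀ v ∈ V, ⟪u, v⟫ ≤ c * ‖u‖ * ‖v‖) {x : E} (hx : x ∈ U ⊔ V) :
    ‖V.starProjection (U.starProjection x) + Vᗮ.starProjection (Uᗮ.starProjection x)‖ ≤
      c * ‖x‖ := by
  set a := U.starProjection x
  set b := Uᗮ.starProjection x
  have hb : b ∈ U ⊔ V := by
    rw [show b = x - a from U.starProjection_orthogonal_val x]
    exact sub_mem hx (Submodule.mem_sup_left (U.starProjection_apply_mem x))
  have horth : ⟪V.starProjection a, Vᗮ.starProjection b⟫ = 0 :=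
    Submodule.inner_right_of_mem_orthogonal (V.starProjection_apply_mem a)
      (Vᗮ.starProjection_apply_mem b)
  have ha := norm_starProjection_le_of_mem hc0 hc (U.starProjection_apply_mem x)
  have hb' := norm_sq_starProjection_orthogonal_le hc (Uᗮ.starProjection_apply_mem x) hb
  rw [← pow_le_pow_iff_left₀ (norm_nonneg _) (by positivity) two_ne_zero,
    norm_add_sq_real, horth, mul_pow, U.norm_sq_eq_add_norm_sq_starProjection x]
  nlinarith [norm_nonneg (V.starProjection a)]

end PrincipalAngle

theorem TOper_eq {n : ℕ} (U V : Submodule ℝ (EuclideanSpace ℝ (Fin n)))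
    (x : EuclideanSpace ℝ (Fin n)) :
    TOper U V x =
      V.starProjection (U.starProjection x) + Vᗮ.starProjection (Uᗮ.starProjection x) := by
  rw [Submodule.starProjection_orthogonal_val, Submodule.starProjection_orthogonal_val]
  rfl

theorem stmt8_general {n : ℕ} (U V : Submodule ℝ (EuclideanSpace ℝ (Fin n)))
    (hUV : U ⊓ V = ⊥)
    (c : ℝ)
    (hc : IsGreatest {t : ℝ | ∃ u ∈ U, ∃ v ∈ V, ‖u‖ = 1 ∧ ‖v‖ = 1 ∧ t = ⟪u, v⟫} c) :
    c < 1 ∧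
    (∀ x ∈ (Uᗮ ⊓ Vᗮ)ᗮ, ‖TOper U V x‖ ≤ c * ‖x‖) ∧
    (∃ x ∈ (Uᗮ ⊓ Vᗮ)ᗮ, ‖x‖ = 1 ∧ ‖TOper U V x‖ = c) := by
  have hc0 := nonneg_of_isGreatest_inner hc
  have hcub : ∀ u ∈ U, ∀ v ∈ V, ⟪u, v⟫ ≤ c * ‖u‖ * ‖v‖ := fun u hu v hv =>
    inner_le_mul_norm_mul_norm_of_mem_upperBounds hc.2 hu hv
  have hW : (Uᗮ ⊓ Vᗮ)ᗮ = U ⊔ V := by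
    rw [Submodule.inf_orthogonal, Submodule.orthogonal_orthogonal]
  obtain ⟨u, hu, v, hv, hu1, hv1, huv⟩ := hc.1
  refine ⟨lt_one_of_isGreatest_inner hUV hc, fun x hx => ?_,
    u, hW ▸ Submodule.mem_sup_left hu, hu1, ?_⟩
  · rw [TOper_eq]
    exact norm_starProjection_add_starProjection_orthogonal_le hc0 hcub (hW ▸ hx)
  · rw [TOper_eq, U.starProjection_eq_self_iff.mpr hu,
      Submodule.starProjection_orthogonal_apply_eq_zero hu, map_zero, add_zero]
    exact norm_starProjection_eq_of_inner_eq hc0 hcub hu hv hu1 hv1 huv.symm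

/-- If `U ∩ V = {0}`, the operator norm of `T = P_V P_U + P_{V⊥} P_{U⊥}` restricted to
the orthogonal complement of `U⊥ ∩ V⊥` equals `cos θ₁ < 1`, where `θ₁` is the first
principal angle between `U` and `V`, i.e. `cos θ₁` is the maximum of `⟪u, v⟫` over
unit vectors `u ∈ U`, `v ∈ V`. -/
theorem stmt8 {n : ℕ} (U V : Submodule ℝ (EuclideanSpace ℝ (Fin n)))
    (hUV : U ⊓ V = ⊥) (hU : U ≠ ⊥) (hV : V ≠ ⊥)
    (c : ℝ)
    (hc : IsGreatest {t : ℝ | ∃ u ∈ U, ∃ v ∈ V, ‖u‖ = 1 ∧ ‖v‖ = 1 ∧ t = ⟪u, v⟫} c) :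
    c < 1 ∧
    (∀ x ∈ (Uᗮ ⊓ Vᗮ)ᗮ, ‖TOper U V x‖ ≤ c * ‖x‖) ∧
    (∃ x ∈ (Uᗮ ⊓ Vᗮ)ᗮ, ‖x‖ = 1 ∧ ‖TOper U V x‖ = c) :=
  stmt8_general U V hUV c hc
end

section
/- The proximal operator of h(x) = ι_{\{x : Ax = b\}}(x) + (1/(2α))||x||² with parameter γ is J_{γ∂h}(x) = (α/(α+γ)) x + A^+(b - (α/(α+γ)) Ax). -/
/-!
Completing the square, `(γ/(2α))‖z‖² + ½‖z - x‖²` equals `((α+γ)/(2α))‖z - cx‖²` up to a constant,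
where `c = α/(α+γ)`, so the minimiser over `{z : Az = b}` is the orthogonal projection of `cx` onto
this affine subspace. That projection is `y + A⁺(b - Ay)` for `y = cx`: the correction `A⁺(b - Ay)`
lies in the row space of `A`, which is orthogonal to `ker A`, so Pythagoras gives strict minimality.
-/

open Matrix

theorem Matrix.isUnit_of_rank_eq_card {m K : Type*} [Fintype m] [DecidableEq m] [Field K]
    {B : Matrix m m K} (h : B.rank = Fintype.card m) : IsUnit B := by
  rw [← mulVec_surjective_iff_isUnit]
  refine (LinearMap.range_eq_top (f := B.mulVecLin)).mp (Submodule.eq_top_of_finrank_eq ?_)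
  rw [← Matrix.rank, h, Module.finrank_fintype_fun_eq_card]

theorem Matrix.dotProduct_transpose_mulVec_eq_zero {m n R : Type*} [Fintype m] [Fintype n]
    [CommSemiring R] {A : Matrix m n R} {d : n → R} (hd : A *ᵥ d = 0) (u : m → R) :
    d ⬝ᵥ (Aᵀ *ᵥ u) = 0 := by
  rw [dotProduct_mulVec, vecMul_transpose, hd, zero_dotProduct]

section AffineProjection

variable {m n K : Type*} [Fintype m] [Fintype n] [DecidableEq m] [Field K]

/-- The orthogonal projection of `y` onto `{z : Az = b}` when `A` has full row rank, in which case
`Aᵀ(AAᵀ)⁻¹` is the pseudoinverse `A⁺`. -/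
noncomputable def affineProjection (A : Matrix m n K) (b : m → K) (y : n → K) : n → K :=
  y + (Aᵀ * (A * Aᵀ)⁻¹) *ᵥ (b - A *ᵥ y)

theorem mulVec_affineProjection (A : Matrix m n K) (b : m → K) (y : n → K)
    (hA : IsUnit (A * Aᵀ).det) : A *ᵥ affineProjection A b y = b := by
  rw [affineProjection, mulVec_add, mulVec_mulVec, ← Matrix.mul_assoc, mul_nonsing_inv _ hA,
    one_mulVec, add_sub_cancel]

theorem dotProduct_sub_affineProjection_lt [LinearOrder K] [IsStrictOrderedRing K]
    (A : Matrix m n K) (b : m → K) (y : n → K) (hA : IsUnit (A * Aᵀ).det) {z : n → K}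
    (hz : A *ᵥ z = b) (hne : z ≠ affineProjection A b y) :
    (affineProjection A b y - y) ⬝ᵥ (affineProjection A b y - y) < (z - y) ⬝ᵥ (z - y) := by
  have hcorr : affineProjection A b y - y = Aᵀ *ᵥ ((A * Aᵀ)⁻¹ *ᵥ (b - A *ᵥ y)) := by
    rw [mulVec_mulVec, affineProjection, add_sub_cancel_left]
  set p := affineProjection A b y
  have hker : A *ᵥ (z - p) = 0 := by
    rw [mulVec_sub, hz, mulVec_affineProjection A b y hA, sub_self]
  have horth : (z - p) ⬝ᵥ (p - y) = 0 := by
    rw [hcorr]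
    exact dotProduct_transpose_mulVec_eq_zero hker _
  have hpos : 0 < (z - p) ⬝ᵥ (z - p) :=
    lt_of_le_of_ne (Fintype.sum_nonneg fun i => mul_self_nonneg _)
      (Ne.symm (dotProduct_self_eq_zero.not.mpr (sub_ne_zero.mpr hne)))
  calc (p - y) ⬝ᵥ (p - y)
      < (z - p) ⬝ᵥ (z - p) + 2 * ((z - p) ⬝ᵥ (p - y)) + (p - y) ⬝ᵥ (p - y) := by
        rw [horth]; linarith
    _ = (z - y) ⬝ᵥ (z - y) := by
        rw [← sub_add_sub_cancel z p y, add_dotProduct, dotProduct_add, dotProduct_add,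
          dotProduct_comm (p - y) (z - p)]
        ring

end AffineProjection

theorem proxObjective_eq_completeSquare {n K : Type*} [Fintype n] [Field K] {α γ : K}
    (hα : α ≠ 0) (hαγ : α + γ ≠ 0) (x z : n → K) :
    γ / (2 * α) * ∑ i, z i ^ 2 + 1 / 2 * ∑ i, (z i - x i) ^ 2 =
      (α + γ) / (2 * α) * ((z - (α / (α + γ)) • x) ⬝ᵥ (z - (α / (α + γ)) • x)) +
        γ / (2 * (α + γ)) * (x ⬝ᵥ x) := by
  have hsq (v : n → K) : ∑ i, v i ^ 2 = v ⬝ᵥ v := by simp only [dotProduct, sq]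
  rw [hsq z, show ∑ i, (z i - x i) ^ 2 = (z - x) ⬝ᵥ (z - x) from hsq (z - x)]
  simp only [sub_dotProduct, dotProduct_sub, smul_dotProduct, dotProduct_smul, smul_eq_mul,
    dotProduct_comm x z]
  field_simp
  ring

/-- The proximal operator of `h(x) = ι_{Ax=b}(x) + ‖x‖²/(2α)` with parameter `γ`
is `J(x) = (α/(α+γ))x + A⁺(b - (α/(α+γ))Ax)`: it is the unique minimizer of
`z ↦ (γ/(2α))‖z‖² + ½‖z - x‖²` over `{z : Az = b}`. -/
theorem stmt14 {m n : ℕ} (A : Matrix (Fin m) (Fin n) ℝ) (b : Fin m → ℝ)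
    (hrank : A.rank = m) (α γ : ℝ) (hα : 0 < α) (hγ : 0 < γ) (x : Fin n → ℝ) :
    A.mulVec ((α / (α + γ)) • x
        + (Aᵀ * (A * Aᵀ)⁻¹).mulVec (b - (α / (α + γ)) • A.mulVec x)) = b ∧
    (∀ z : Fin n → ℝ, A.mulVec z = b →
      z ≠ (α / (α + γ)) • x
        + (Aᵀ * (A * Aᵀ)⁻¹).mulVec (b - (α / (α + γ)) • A.mulVec x) →
      (γ / (2 * α)) * (∑ i, ((α / (α + γ)) • x
          + (Aᵀ * (A * Aᵀ)⁻¹).mulVec (b - (α / (α + γ)) • A.mulVec x)) i ^ 2)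
        + (1/2) * (∑ i, (((α / (α + γ)) • x
          + (Aᵀ * (A * Aᵀ)⁻¹).mulVec (b - (α / (α + γ)) • A.mulVec x)) i - x i) ^ 2)
      < (γ / (2 * α)) * (∑ i, (z i) ^ 2) + (1/2) * (∑ i, (z i - x i) ^ 2)) := by
  have hdet : IsUnit (A * Aᵀ).det := (A * Aᵀ).isUnit_iff_isUnit_det.mp <|
    isUnit_of_rank_eq_card (by rw [rank_self_mul_transpose, hrank, Fintype.card_fin])
  have hJ : affineProjection A b ((α / (α + γ)) • x) = (α / (α + γ)) • x
      + (Aᵀ * (A * Aᵀ)⁻¹).mulVec (b - (α / (α + γ)) • A.mulVec x) := by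
    rw [affineProjection, mulVec_smul]
  rw [← hJ]
  refine ⟨mulVec_affineProjection A b _ hdet, fun z hz hne => ?_⟩
  rw [proxObjective_eq_completeSquare hα.ne' (by positivity),
    proxObjective_eq_completeSquare hα.ne' (by positivity)]
  gcongr
  exact dotProduct_sub_affineProjection_lt A b _ hdet hz hne
end
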